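/- Let N ≥ 1, 1 < p < ∞ and q = p/(p−1). Let u ∈ L^p(ℝ^N) be nonnegative, let H ⊂ ℝ^N be a closed halfspace having 0 as an interior point, and let w ∈ L^q(ℝ^N) be nonnegative, radial and radially strictly decreasing. If ∫_{ℝ^N} u w = ∫_{ℝ^N} u^H w, then u = u^H almost everywhere. -/

import Mathlib

/-!
Let `σ` be the reflection across `∂H`. Since `b > 0`, `σ` moves the points of the open side
`⟪a,x⟫ < b` away from the origin, so `w ≥ w ∘ σ` on `H` and `w ≤ w ∘ σ` off `H`, strictly off `∂H`.
With `φ = (u^H - u) w`, the identity `u^H ∘ σ - u ∘ σ = -(u^H - u)` gives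
`φ + φ ∘ σ = (u^H - u) (w - w ∘ σ)`, which is pointwise nonnegative because `u^H ≥ u` on `H` and
`u^H ≤ u` off `H`. As `σ` preserves Lebesgue measure, `∫ (φ + φ ∘ σ) = 2 ∫ φ = 0`, so the product
vanishes almost everywhere, and therefore `u^H = u` almost everywhere (on `∂H` trivially).
Hölder's inequality makes all the integrands integrable.
-/

open MeasureTheory Filter

/-- Reflection across the boundary hyperplane `{x : ⟪a,x⟫ = b}` of the closed
halfspace `H = {x : ⟪a,x⟫ ≤ b}` (for `‖a‖ = 1`). -/
noncomputable def reflectH {N : ℕ} (a : EuclideanSpace ℝ (Fin N)) (b : ℝ)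
    (x : EuclideanSpace ℝ (Fin N)) : EuclideanSpace ℝ (Fin N) :=
  x - (2 * ((inner ℝ a x : ℝ) - b)) • a

/-- Polarization (two-point rearrangement) of `u` with respect to the closed halfspace
`H = {x : ⟪a,x⟫ ≤ b}` (for `‖a‖ = 1`). -/
noncomputable def polarization {N : ℕ} (a : EuclideanSpace ℝ (Fin N)) (b : ℝ)
    (u : EuclideanSpace ℝ (Fin N) → ℝ) (x : EuclideanSpace ℝ (Fin N)) : ℝ :=
  if (inner ℝ a x : ℝ) ≤ b then max (u x) (u (reflectH a b x))
  else min (u x) (u (reflectH a b x))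

open scoped ENNReal

section

variable {N : ℕ} {a : EuclideanSpace ℝ (Fin N)} {b : ℝ}

lemma inner_reflectH (ha : ‖a‖ = 1) (x : EuclideanSpace ℝ (Fin N)) :
    inner ℝ a (reflectH a b x) = 2 * b - inner ℝ a x := by
  rw [reflectH, inner_sub_right, real_inner_smul_right, real_inner_self_eq_norm_sq, ha]
  ring

lemma reflectH_reflectH (ha : ‖a‖ = 1) (x : EuclideanSpace ℝ (Fin N)) :
    reflectH a b (reflectH a b x) = x := by
  rw [reflectH, inner_reflectH ha, reflectH]
  module

lemma reflectH_of_inner_eq {x : EuclideanSpace ℝ (Fin N)} (hx : inner ℝ a x = b) :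
    reflectH a b x = x := by
  simp [reflectH, hx]

lemma reflectH_eq_reflection_add (ha : ‖a‖ = 1) :
    reflectH a b = fun x => (ℝ ∙ a)ᗮ.reflection x + (2 * b) • a := by
  ext1 x
  rw [Submodule.reflection_orthogonal_apply, Submodule.reflection_apply,
    Submodule.starProjection_singleton, ha, reflectH]
  simp only [one_pow, real_inner_comm x a]
  module

lemma measurePreserving_reflectH (ha : ‖a‖ = 1) :
    MeasurePreserving (reflectH a b) volume volume := by
  rw [reflectH_eq_reflection_add ha]
  exact (measurePreserving_add_right volume _).comp (LinearIsometryEquiv.measurePreserving _)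

lemma measurableEmbedding_reflectH (ha : ‖a‖ = 1) : MeasurableEmbedding (reflectH a b) := by
  have hm : Measurable (reflectH a b) := by unfold reflectH; fun_prop
  exact (MeasurableEquiv.mk ⟨_, _, reflectH_reflectH ha, reflectH_reflectH ha⟩ hm hm
    ).measurableEmbedding

lemma integrable_comp_reflectH (ha : ‖a‖ = 1) {f : EuclideanSpace ℝ (Fin N) → ℝ}
    (hf : Integrable f) : Integrable fun x => f (reflectH a b x) :=
  ((measurePreserving_reflectH ha).integrable_comp_emb (measurableEmbedding_reflectH ha)).mpr hf

lemma integral_add_comp_reflectH (ha : ‖a‖ = 1) {f : EuclideanSpace ℝ (Fin N) → ℝ}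
    (hf : Integrable f) : ∫ x, (f x + f (reflectH a b x)) = 2 * ∫ x, f x := by
  rw [integral_add hf (integrable_comp_reflectH ha hf),
    (measurePreserving_reflectH ha).integral_comp (measurableEmbedding_reflectH ha)]
  ring

lemma norm_sq_reflectH (ha : ‖a‖ = 1) (x : EuclideanSpace ℝ (Fin N)) :
    ‖reflectH a b x‖ ^ 2 = ‖x‖ ^ 2 + 4 * b * (b - inner ℝ a x) := by
  rw [← real_inner_self_eq_norm_sq, ← real_inner_self_eq_norm_sq, reflectH, inner_sub_sub_self,
    real_inner_smul_left, real_inner_smul_right, real_inner_smul_left, real_inner_smul_right,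
    real_inner_self_eq_norm_sq a, ha, real_inner_comm x a]
  ring

lemma norm_le_norm_reflectH_iff (ha : ‖a‖ = 1) (hb : 0 < b) (x : EuclideanSpace ℝ (Fin N)) :
    ‖x‖ ≤ ‖reflectH a b x‖ ↔ inner ℝ a x ≤ b := by
  rw [← sq_le_sq₀ (norm_nonneg _) (norm_nonneg _), norm_sq_reflectH ha]
  constructor <;> intro h <;> nlinarith

lemma norm_lt_norm_reflectH_iff (ha : ‖a‖ = 1) (hb : 0 < b) (x : EuclideanSpace ℝ (Fin N)) :
    ‖x‖ < ‖reflectH a b x‖ ↔ inner ℝ a x < b := by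
  rw [← sq_lt_sq₀ (norm_nonneg _) (norm_nonneg _), norm_sq_reflectH ha]
  constructor <;> intro h <;> nlinarith

lemma memLp_polarization (ha : ‖a‖ = 1) {p : ℝ≥0∞} {u : EuclideanSpace ℝ (Fin N) → ℝ}
    (hu : MemLp u p) : MemLp (polarization a b u) p := by
  have huσ := hu.comp_measurePreserving (measurePreserving_reflectH (b := b) ha)
  have hH : MeasurableSet {x : EuclideanSpace ℝ (Fin N) | inner ℝ a x ≤ b} :=
    measurableSet_le (by fun_prop) measurable_const
  have hpol : polarization a b u = {x | inner ℝ a x ≤ b}.piecewise (u ⊔ u ∘ reflectH a b)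
      (u ⊓ u ∘ reflectH a b) := by
    ext1 x
    by_cases hx : inner ℝ a x ≤ b <;> simp [polarization, hx]
  rw [hpol]
  exact ((hu.sup huσ).restrict _).piecewise hH ((hu.inf huσ).restrict _)

variable (u : EuclideanSpace ℝ (Fin N) → ℝ)

lemma polarization_of_inner_eq {x : EuclideanSpace ℝ (Fin N)} (hx : inner ℝ a x = b) :
    polarization a b u x = u x := by
  simp [polarization, hx, reflectH_of_inner_eq hx]

lemma polarization_reflectH_sub (ha : ‖a‖ = 1) (x : EuclideanSpace ℝ (Fin N)) :
    polarization a b u (reflectH a b x) - u (reflectH a b x) = -(polarization a b u x - u x) := by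
  have hσ := inner_reflectH (b := b) ha x
  rcases lt_trichotomy (inner ℝ a x) b with h | h | h
  · have h' : ¬ inner ℝ a (reflectH a b x) ≤ b := by linarith
    simp only [polarization, h.le, h', if_true, if_false, reflectH_reflectH ha]
    rcases le_total (u x) (u (reflectH a b x)) with h2 | h2 <;> simp [h2]
  · simp [reflectH_of_inner_eq h, polarization_of_inner_eq u h]
  · have h' : inner ℝ a (reflectH a b x) ≤ b := by linarith
    simp only [polarization, not_le.mpr h, h', if_true, if_false, reflectH_reflectH ha]
    rcases le_total (u x) (u (reflectH a b x)) with h2 | h2 <;> simp [h2]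

variable {W : ℝ → ℝ}

lemma polarization_gain_mul_nonneg (hW : StrictAntiOn W (Set.Ici 0)) (ha : ‖a‖ = 1) (hb : 0 < b)
    (x : EuclideanSpace ℝ (Fin N)) :
    0 ≤ (polarization a b u x - u x) * (W ‖x‖ - W ‖reflectH a b x‖) := by
  by_cases hx : inner ℝ a x ≤ b
  · have hu : u x ≤ polarization a b u x := by simp [polarization, hx]
    have hW' : W ‖reflectH a b x‖ ≤ W ‖x‖ :=
      hW.antitoneOn (norm_nonneg _) (norm_nonneg _) ((norm_le_norm_reflectH_iff ha hb x).mpr hx)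
    exact mul_nonneg (by linarith) (by linarith)
  · have hu : polarization a b u x ≤ u x := by simp [polarization, hx]
    have hW' : W ‖x‖ ≤ W ‖reflectH a b x‖ :=
      hW.antitoneOn (norm_nonneg _) (norm_nonneg _)
        (not_le.mp (mt (norm_le_norm_reflectH_iff ha hb x).mp hx)).le
    exact mul_nonneg_of_nonpos_of_nonpos (by linarith) (by linarith)

lemma eq_polarization_of_gain_mul_eq_zero (hW : StrictAntiOn W (Set.Ici 0)) (ha : ‖a‖ = 1)
    (hb : 0 < b) {x : EuclideanSpace ℝ (Fin N)}
    (h : (polarization a b u x - u x) * (W ‖x‖ - W ‖reflectH a b x‖) = 0) :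
    u x = polarization a b u x := by
  rcases eq_or_ne (inner ℝ a x) b with hx | hx
  · exact (polarization_of_inner_eq u hx).symm
  have hWne : W ‖x‖ ≠ W ‖reflectH a b x‖ := by
    rcases hx.lt_or_gt with hlt | hgt
    · exact (hW (norm_nonneg _) (norm_nonneg _) ((norm_lt_norm_reflectH_iff ha hb x).mpr hlt)).ne'
    · exact (hW (norm_nonneg _) (norm_nonneg _)
        (not_le.mp (mt (norm_le_norm_reflectH_iff ha hb x).mp (not_le.mpr hgt)))).ne
  have := (mul_eq_zero.mp h).resolve_right (sub_ne_zero.mpr hWne)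
  linarith

end

theorem statement2_general {N : ℕ} (p q : ℝ) (hp : 1 < p) (hq : q = p / (p - 1))
    (u : EuclideanSpace ℝ (Fin N) → ℝ)
    (hu : MemLp u (ENNReal.ofReal p) volume)
    (a : EuclideanSpace ℝ (Fin N)) (b : ℝ) (ha : ‖a‖ = 1) (hb : 0 < b)
    (w : EuclideanSpace ℝ (Fin N) → ℝ)
    (hw : MemLp w (ENNReal.ofReal q) volume)
    (W : ℝ → ℝ) (hW : StrictAntiOn W (Set.Ici 0)) (hwW : ∀ x, w x = W ‖x‖)
    (heq : ∫ x, u x * w x = ∫ x, polarization a b u x * w x) :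
    u =ᵐ[volume] polarization a b u := by
  have : ENNReal.HolderConjugate (ENNReal.ofReal p) (ENNReal.ofReal q) :=
    ((Real.holderConjugate_iff_eq_conjExponent hp).mpr hq).ennrealOfReal
  have hpolw : Integrable fun x => polarization a b u x * w x :=
    (memLp_polarization ha hu).integrable_mul hw
  have huw : Integrable fun x => u x * w x := hu.integrable_mul hw
  set φ := fun x => polarization a b u x * w x - u x * w x
  have hφ : Integrable φ := hpolw.sub huw
  have hφ0 : ∫ x, φ x = 0 := by rw [integral_sub hpolw huw, heq, sub_self]
  have hsym : (fun x => φ x + φ (reflectH a b x)) =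
      fun x => (polarization a b u x - u x) * (W ‖x‖ - W ‖reflectH a b x‖) := by
    ext x
    linear_combination (hwW x - hwW (reflectH a b x)) * (polarization a b u x - u x) +
      w (reflectH a b x) * polarization_reflectH_sub u ha x
  have hint : Integrable fun x => φ x + φ (reflectH a b x) :=
    hφ.add (integrable_comp_reflectH ha hφ)
  have hzero : ∫ x, (φ x + φ (reflectH a b x)) = 0 := by
    rw [integral_add_comp_reflectH ha hφ, hφ0, mul_zero]
  rw [hsym] at hint hzero
  filter_upwards [(integral_eq_zero_iff_of_nonneg (polarization_gain_mul_nonneg u hW ha hb)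
    hint).mp hzero] with x hx
  exact eq_polarization_of_gain_mul_eq_zero u hW ha hb hx

/-- For nonnegative `u ∈ L^p(ℝ^N)`, a closed halfspace
`H = {x : ⟪a,x⟫ ≤ b}` having `0` as interior point (i.e. `b > 0`), and a nonnegative, radial and
radially strictly decreasing `w ∈ L^q(ℝ^N)` (`q = p/(p-1)`), equality `∫ u w = ∫ u^H w`
implies `u = u^H` almost everywhere. -/
theorem statement2 {N : ℕ} (hN : 1 ≤ N) (p q : ℝ) (hp : 1 < p) (hq : q = p / (p - 1))
    (u : EuclideanSpace ℝ (Fin N) → ℝ)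
    (hu : MemLp u (ENNReal.ofReal p) volume) (hu0 : ∀ x, 0 ≤ u x)
    (a : EuclideanSpace ℝ (Fin N)) (b : ℝ) (ha : ‖a‖ = 1) (hb : 0 < b)
    (w : EuclideanSpace ℝ (Fin N) → ℝ)
    (hw : MemLp w (ENNReal.ofReal q) volume) (hw0 : ∀ x, 0 ≤ w x)
    (W : ℝ → ℝ) (hW : StrictAntiOn W (Set.Ici 0)) (hwW : ∀ x, w x = W ‖x‖)
    (heq : ∫ x, u x * w x = ∫ x, polarization a b u x * w x) :
    u =ᵐ[volume] polarization a b u :=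
  statement2_general p q hp hq u hu a b ha hb w hw W hW hwW heq
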